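/- arXiv:1710.02240 — 4 statements merged into one kernel-verified Lean document; each statement's English description precedes it below -/
import Mathlib

section
/- Let φ be a nonnegative nontrivial Radon measure on Ω̄ decomposed as φ = φ_ac·dy + φ_s with φ_ac ∈ L¹(Ω) nonnegative and φ_s ⟂ dy nonnegative. Then φ solves μ(M⋆φ − φ) + (a(y)+λ)φ = 0 in the sense of measures if and only if: (i) μ(M⋆φ)(y) + (a(y) − μ + λ)φ_ac(y) = 0 for Lebesgue-a.e. y, and (ii) a(y) − μ + λ = 0 for φ_s-a.e. y. -/
/-!
Since `φ` lives on the compact set `closure Ω`, on which `M` and `a` are continuous, all integrands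
are bounded and the `φ`-integral splits along `φ = φ_ac · dy + φ_s`. Testing the equation against
`ψ` then reads `∫ ψ G dy + ∫ ψ h dφ_s = 0` with `G = μ (M⋆φ) + h φ_ac` and `h = a - μ + λ`.
As `φ_s ⟂ dy`, the two densities `G` and `h` glue to one density of `dy + φ_s`, and the
fundamental lemma of the calculus of variations makes it vanish almost everywhere.
-/

open MeasureTheory Set

section MutuallySingular

variable {E : Type*} [NormedAddCommGroup E] [NormedSpace ℝ E] [FiniteDimensional ℝ E]
  [MeasurableSpace E] [BorelSpace E] {ρ σ : Measure E} {f g : E → ℝ}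

theorem MeasureTheory.Measure.MutuallySingular.forall_integral_mul_add_integral_mul_eq_zero_iff
    (hσρ : σ ⟂ₘ ρ) (hf : Integrable f ρ) (hg : Integrable g σ) :
    (∀ ψ : E → ℝ, Continuous ψ → HasCompactSupport ψ →
        ∫ x, ψ x * f x ∂ρ + ∫ x, ψ x * g x ∂σ = 0) ↔
      (∀ᵐ x ∂ρ, f x = 0) ∧ ∀ᵐ x ∂σ, g x = 0 := by
  classical
  refine ⟨fun h => ?_, fun ⟨hf0, hg0⟩ ψ _ _ => ?_⟩
  · -- glue `f` and `g` into one density for `ρ + σ`, using a set carrying `ρ` but not `σ`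
    let H := hσρ.nullSet.piecewise f g
    have hHρ : H =ᵐ[ρ] f := by
      filter_upwards [mem_ae_iff.2 hσρ.measure_compl_nullSet] with x hx
      exact piecewise_eq_of_mem _ _ _ hx
    have hHσ : H =ᵐ[σ] g := by
      filter_upwards [measure_eq_zero_iff_ae_notMem.1 hσρ.measure_nullSet] with x hx
      exact piecewise_eq_of_notMem _ _ _ hx
    have hH : LocallyIntegrable H (ρ + σ) :=
      (integrable_add_measure.2 ⟨hf.congr hHρ.symm, hg.congr hHσ.symm⟩).locallyIntegrable
    have hH0 : ∀ᵐ x ∂(ρ + σ), H x = 0 := by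
      refine ae_eq_zero_of_integral_contDiff_smul_eq_zero hH fun ψ hψ hψc => ?_
      have hψH := integrable_add_measure.1
        (hH.integrable_smul_left_of_hasCompactSupport hψ.continuous hψc)
      have hρ : ∫ x, ψ x • H x ∂ρ = ∫ x, ψ x * f x ∂ρ :=
        integral_congr_ae (hHρ.mono fun x hx => by simp only [smul_eq_mul, hx])
      have hσ : ∫ x, ψ x • H x ∂σ = ∫ x, ψ x * g x ∂σ :=
        integral_congr_ae (hHσ.mono fun x hx => by simp only [smul_eq_mul, hx])
      rw [integral_add_measure hψH.1 hψH.2, hρ, hσ]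
      exact h ψ hψ.continuous hψc
    rw [ae_add_measure_iff] at hH0
    constructor
    · filter_upwards [hH0.1, hHρ] with x hx0 hx using hx ▸ hx0
    · filter_upwards [hH0.2, hHσ] with x hx0 hx using hx ▸ hx0
  · rw [integral_eq_zero_of_ae (hf0.mono fun x hx => by simp [hx]),
      integral_eq_zero_of_ae (hg0.mono fun x hx => by simp [hx]), add_zero]

end MutuallySingular

theorem integrable_of_continuousOn_of_ae_mem {X E : Type*} [TopologicalSpace X] [T2Space X]
    [MeasurableSpace X] [OpensMeasurableSpace X] [NormedAddCommGroup E] {ν : Measure X}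
    [IsFiniteMeasureOnCompacts ν] {K : Set X} {w : X → E} (hK : IsCompact K)
    (hνK : ∀ᵐ x ∂ν, x ∈ K) (hw : ContinuousOn w K) : Integrable w ν := by
  simpa [IntegrableOn, Measure.restrict_eq_self_of_ae_mem hνK] using
    hw.integrableOn_compact (μ := ν) hK

theorem continuousOn_integral_of_continuousOn_uncurry {X Y E : Type*} [TopologicalSpace X]
    [FirstCountableTopology X]
    [TopologicalSpace Y] [T2Space Y] [MeasurableSpace Y] [OpensMeasurableSpace Y]
    [NormedAddCommGroup E] [NormedSpace ℝ E] {ν : Measure Y} [IsFiniteMeasure ν]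
    {s : Set X} {K : Set Y} {f : X → Y → E} (hs : IsCompact s) (hK : IsCompact K)
    (hνK : ∀ᵐ y ∂ν, y ∈ K) (hf : ContinuousOn (Function.uncurry f) (s ×ˢ K)) :
    ContinuousOn (fun x => ∫ y, f x y ∂ν) s := by
  obtain ⟨C, hC⟩ := (hs.prod hK).exists_bound_of_continuousOn hf
  refine continuousOn_of_dominated (bound := fun _ => C) (fun x hx => ?_) (fun x hx => ?_)
    (integrable_const C) ?_
  · refine (integrable_of_continuousOn_of_ae_mem hK hνK ?_).aestronglyMeasurable
    exact hf.comp (Continuous.prodMk_right x).continuousOn fun y hy => mk_mem_prod hx hy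
  · filter_upwards [hνK] with y hy using hC (x, y) (mk_mem_prod hx hy)
  · filter_upwards [hνK] with y hy
    exact hf.comp (Continuous.prodMk_left y).continuousOn fun x hx => mk_mem_prod hx hy

section WithDensityOfReal

variable {α E : Type*} [MeasurableSpace α] [NormedAddCommGroup E] [NormedSpace ℝ E]
  {ρ : Measure α} {f : α → ℝ}

theorem integrable_withDensity_ofReal_iff (hf : AEMeasurable f ρ) (hf0 : 0 ≤ᵐ[ρ] f)
    {w : α → E} :
    Integrable w (ρ.withDensity fun x => ENNReal.ofReal (f x)) ↔
      Integrable (fun x => f x • w x) ρ := by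
  rw [integrable_withDensity_iff_integrable_smul₀' hf.ennreal_ofReal
    (ae_of_all _ fun _ => ENNReal.ofReal_lt_top)]
  refine integrable_congr (hf0.mono fun x hx => ?_)
  simp only [ENNReal.toReal_ofReal hx]

theorem integral_withDensity_ofReal (hf : AEMeasurable f ρ) (hf0 : 0 ≤ᵐ[ρ] f) (w : α → E) :
    ∫ x, w x ∂(ρ.withDensity fun x => ENNReal.ofReal (f x)) = ∫ x, f x • w x ∂ρ := by
  rw [integral_withDensity_eq_integral_toReal_smul₀ hf.ennreal_ofReal
    (ae_of_all _ fun _ => ENNReal.ofReal_lt_top)]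
  refine integral_congr_ae (hf0.mono fun x hx => ?_)
  simp only [ENNReal.toReal_ofReal hx]

theorem integrable_and_integral_eq_of_eq_withDensity_ofReal_add {φ σ : Measure α}
    (hφ : φ = (ρ.withDensity fun x => ENNReal.ofReal (f x)) + σ) (hf : AEMeasurable f ρ)
    (hf0 : 0 ≤ᵐ[ρ] f) {w : α → ℝ} (hw : Integrable w φ) :
    Integrable (fun x => f x * w x) ρ ∧ Integrable w σ ∧
      ∫ x, w x ∂φ = (∫ x, f x * w x ∂ρ) + ∫ x, w x ∂σ := by
  subst hφ
  rw [integrable_add_measure] at hw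
  refine ⟨(integrable_withDensity_ofReal_iff hf hf0).1 hw.1, hw.2, ?_⟩
  rw [integral_add_measure hw.1 hw.2, integral_withDensity_ofReal hf hf0]
  rfl

end WithDensityOfReal

theorem stmt1_general {n : ℕ} (Ω : Set (EuclideanSpace ℝ (Fin n)))
    (hΩbdd : Bornology.IsBounded Ω)
    (a : EuclideanSpace ℝ (Fin n) → ℝ) (ha : ContinuousOn a (closure Ω))
    (μ lam : ℝ)
    (M : EuclideanSpace ℝ (Fin n) → EuclideanSpace ℝ (Fin n) → ℝ)
    (hM : ContinuousOn (fun p : EuclideanSpace ℝ (Fin n) × EuclideanSpace ℝ (Fin n) => M p.1 p.2)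
      (closure Ω ×ˢ closure Ω))
    (φ : Measure (EuclideanSpace ℝ (Fin n))) [IsFiniteMeasure φ]
    (hφsupp : φ (closure Ω)ᶜ = 0)
    (fac : EuclideanSpace ℝ (Fin n) → ℝ)
    (hfac_int : IntegrableOn fac Ω) (hfac_nonneg : ∀ y, 0 ≤ fac y)
    (φs : Measure (EuclideanSpace ℝ (Fin n)))
    (hsing : φs ⟂ₘ (volume.restrict Ω))
    (hdecomp : φ = (volume.restrict Ω).withDensity (fun y => ENNReal.ofReal (fac y)) + φs) :
    ((∀ ψ : EuclideanSpace ℝ (Fin n) → ℝ, Continuous ψ → HasCompactSupport ψ →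
        (∫ y in Ω, ψ y * (μ * ∫ z, M y z ∂φ)) + (∫ y, ψ y * (a y - μ + lam) ∂φ) = 0)
      ↔
      ((∀ᵐ y ∂(volume.restrict Ω), μ * (∫ z, M y z ∂φ) + (a y - μ + lam) * fac y = 0) ∧
        (∀ᵐ y ∂φs, a y - μ + lam = 0))) := by
  have hK : IsCompact (closure Ω) := hΩbdd.isCompact_closure
  have hφK : ∀ᵐ y ∂φ, y ∈ closure Ω := ae_iff.2 hφsupp
  have hLK : ∀ᵐ y ∂(volume.restrict Ω), y ∈ closure Ω :=
    ae_restrict_of_ae_restrict_of_subset subset_closure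
      (ae_restrict_mem isClosed_closure.measurableSet)
  have : IsFiniteMeasure (volume.restrict Ω) :=
    isFiniteMeasure_restrict.2 hΩbdd.measure_lt_top.ne
  have hF : ContinuousOn (fun y => ∫ z, M y z ∂φ) (closure Ω) :=
    continuousOn_integral_of_continuousOn_uncurry hK hK hφK hM
  have hh : ContinuousOn (fun y => a y - μ + lam) (closure Ω) := by fun_prop
  have hsplit : ∀ w, ContinuousOn w (closure Ω) →
      Integrable (fun y => fac y * w y) (volume.restrict Ω) ∧ Integrable w φs ∧
        ∫ y, w y ∂φ = (∫ y in Ω, fac y * w y) + ∫ y, w y ∂φs := fun w hw =>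
    integrable_and_integral_eq_of_eq_withDensity_ofReal_add hdecomp hfac_int.aemeasurable
      (ae_of_all _ hfac_nonneg) (integrable_of_continuousOn_of_ae_mem hK hφK hw)
  obtain ⟨hhfac, hhs, -⟩ := hsplit _ hh
  have hG : Integrable (fun y => μ * (∫ z, M y z ∂φ) + (a y - μ + lam) * fac y)
      (volume.restrict Ω) :=
    (integrable_of_continuousOn_of_ae_mem hK hLK (continuousOn_const.mul hF)).add
      (hhfac.congr (ae_of_all _ fun y => mul_comm _ _))
  rw [← hsing.forall_integral_mul_add_integral_mul_eq_zero_iff hG hhs]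
  refine forall_congr' fun ψ => imp_congr_right fun hψ => imp_congr_right fun _ => ?_
  obtain ⟨hψh, -, hψsplit⟩ := hsplit (fun y => ψ y * (a y - μ + lam)) (hψ.continuousOn.mul hh)
  have hψF : Integrable (fun y => ψ y * (μ * ∫ z, M y z ∂φ)) (volume.restrict Ω) :=
    integrable_of_continuousOn_of_ae_mem hK hLK
      (hψ.continuousOn.mul (continuousOn_const.mul hF))
  have hψG : ∫ y in Ω, ψ y * (μ * (∫ z, M y z ∂φ) + (a y - μ + lam) * fac y) =
      (∫ y in Ω, ψ y * (μ * ∫ z, M y z ∂φ)) + ∫ y in Ω, fac y * (ψ y * (a y - μ + lam)) := by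
    rw [← integral_add hψF hψh]
    exact integral_congr_ae (ae_of_all _ fun y => by ring)
  rw [hψsplit, hψG, add_assoc]

/-- A nonnegative nontrivial Radon measure φ = φ_ac·dy + φ_s (Lebesgue
decomposition with respect to Lebesgue measure on Ω) solves
μ(M⋆φ − φ) + (a+λ)φ = 0 in the sense of measures if and only if
(i) μ(M⋆φ)(y) + (a(y) − μ + λ)φ_ac(y) = 0 for a.e. y in Ω (Lebesgue), and
(ii) a(y) − μ + λ = 0 for φ_s-a.e. y. -/
theorem stmt1 {n : ℕ} (Ω : Set (EuclideanSpace ℝ (Fin n)))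
    (hΩopen : IsOpen Ω) (hΩbdd : Bornology.IsBounded Ω)
    (a : EuclideanSpace ℝ (Fin n) → ℝ) (ha : ContinuousOn a (closure Ω))
    (μ lam : ℝ) (hμ : 0 < μ)
    (M : EuclideanSpace ℝ (Fin n) → EuclideanSpace ℝ (Fin n) → ℝ)
    (hM : ContinuousOn (fun p : EuclideanSpace ℝ (Fin n) × EuclideanSpace ℝ (Fin n) => M p.1 p.2)
      (closure Ω ×ˢ closure Ω))
    (hMpos : ∀ y ∈ closure Ω, ∀ z ∈ closure Ω, 0 < M y z)
    (hMmass : ∀ z ∈ closure Ω, (∫ y in closure Ω, M y z) = 1)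
    (φ : Measure (EuclideanSpace ℝ (Fin n))) [IsFiniteMeasure φ]
    (hφsupp : φ (closure Ω)ᶜ = 0) (hφnt : φ (closure Ω) ≠ 0)
    (fac : EuclideanSpace ℝ (Fin n) → ℝ)
    (hfac_int : IntegrableOn fac Ω) (hfac_nonneg : ∀ y, 0 ≤ fac y)
    (φs : Measure (EuclideanSpace ℝ (Fin n))) [IsFiniteMeasure φs]
    (hsing : φs ⟂ₘ (volume.restrict Ω))
    (hdecomp : φ = (volume.restrict Ω).withDensity (fun y => ENNReal.ofReal (fac y)) + φs) :
    ((∀ ψ : EuclideanSpace ℝ (Fin n) → ℝ, Continuous ψ → HasCompactSupport ψ →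
        (∫ y in Ω, ψ y * (μ * ∫ z, M y z ∂φ)) + (∫ y, ψ y * (a y - μ + lam) ∂φ) = 0)
      ↔
      ((∀ᵐ y ∂(volume.restrict Ω), μ * (∫ z, M y z ∂φ) + (a y - μ + lam) * fac y = 0) ∧
        (∀ᵐ y ∂φs, a y - μ + lam = 0))) :=
  stmt1_general Ω hΩbdd a ha μ lam M hM φ hφsupp fac hfac_int hfac_nonneg φs hsing hdecomp
end

section
/- Suppose φ = φ_ac·dy + φ_s is a nonnegative nontrivial measure solution of μ(M⋆φ − φ) + (a(y)+λ)φ = 0 with λ = −(sup a − μ). If 1/(sup a − a(y)) ∉ L¹(Ω), then no such solution exists: indeed φ_ac(y) = μ(M⋆φ)(y)/(sup a − a(y)) ≥ μ m₀ (∫φ)/(sup a − a(y)), contradicting φ_ac ∈ L¹(Ω). -/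
/-!
Testing the equation against `ψ ∈ C_c` shows that the measures `(sup a - a) • φ` and
`μ (M⋆φ) dy|_Ω` coincide. Splitting `φ = φ_ac dy + φ_s` and using uniqueness of the Lebesgue
decomposition with respect to `dy|_Ω` gives `φ_ac (sup a - a) = μ (M⋆φ) ≥ μ m₀ φ(Ω̄) > 0`
a.e. on `Ω`, so `1 / (sup a - a) ≤ φ_ac / (μ m₀ φ(Ω̄))` would be integrable.
-/

open MeasureTheory Set
open scoped ENNReal CompactlySupported

universe u v

theorem ContinuousOn.exists_continuousMap_eqOn {X : Type u} {Y : Type v} [TopologicalSpace X]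
    [NormalSpace X] [TopologicalSpace Y] [TietzeExtension.{u, v} Y] {K : Set X} (hK : IsClosed K)
    {f : X → Y} (hf : ContinuousOn f K) : ∃ g : C(X, Y), EqOn g f K := by
  obtain ⟨g, hg⟩ := ContinuousMap.exists_restrict_eq hK ⟨K.domRestrict f, hf.domRestrict⟩
  exact ⟨g, fun x hx => congr($hg ⟨x, hx⟩)⟩

theorem ContinuousOn.continuousOn_integral {X Y : Type*} [PseudoMetricSpace X]
    [LocallyCompactSpace X] [MetricSpace Y] [MeasurableSpace Y] [OpensMeasurableSpace Y]
    {ν : Measure Y} [IsLocallyFiniteMeasure ν] {f : X → Y → ℝ} {K : Set X} {L : Set Y}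
    (hf : ContinuousOn (Function.uncurry f) (K ×ˢ L)) (hK : IsClosed K) (hL : IsCompact L)
    (hνL : ∀ᵐ y ∂ν, y ∈ L) : ContinuousOn (fun x => ∫ y, f x y ∂ν) K := by
  obtain ⟨g, hg⟩ := hf.exists_continuousMap_eqOn (hK.prod hL.isClosed)
  rw [← Measure.restrict_eq_self_of_ae_mem hνL]
  refine (continuous_parametric_integral_of_continuous (f := fun x y => g (x, y)) (μ := ν)
    g.continuous hL).continuousOn.congr fun x hx => ?_
  exact setIntegral_congr_fun hL.measurableSet fun y hy => (hg (mk_mem_prod hx hy)).symm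

section Measure

variable {X : Type*} [MeasurableSpace X]

theorem ContinuousOn.integrable_of_ae_mem_isCompact [TopologicalSpace X] [T2Space X]
    [OpensMeasurableSpace X] {ν : Measure X} [IsFiniteMeasureOnCompacts ν] {K : Set X} {f : X → ℝ}
    (hf : ContinuousOn f K) (hK : IsCompact K) (hνK : ∀ᵐ x ∂ν, x ∈ K) : Integrable f ν := by
  rw [← Measure.restrict_eq_self_of_ae_mem hνK]
  exact hf.integrableOn_compact hK

theorem integral_withDensity_ofReal_s2 {E : Type*} [NormedAddCommGroup E] [NormedSpace ℝ E]
    {ν : Measure X} {f : X → ℝ} (hf : AEMeasurable f ν) (hf0 : 0 ≤ᵐ[ν] f) (g : X → E) :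
    ∫ x, g x ∂ν.withDensity (fun x => ENNReal.ofReal (f x)) = ∫ x, f x • g x ∂ν := by
  rw [integral_withDensity_eq_integral_toReal_smul₀ hf.ennreal_ofReal
    (ae_of_all _ fun _ => ENNReal.ofReal_lt_top)]
  exact integral_congr_ae <| hf0.mono fun x hx => by simp only [ENNReal.toReal_ofReal hx]

theorem withDensity_ofReal_eq_of_forall_integral_mul_eq [TopologicalSpace X]
    [TopologicalSpace.PseudoMetrizableSpace X] [T2Space X] [LocallyCompactSpace X]
    [SigmaCompactSpace X] [BorelSpace X] {ν ρ : Measure X} {f g : X → ℝ}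
    (hf : Integrable f ν) (hg : Integrable g ρ) (hf0 : 0 ≤ᵐ[ν] f) (hg0 : 0 ≤ᵐ[ρ] g)
    (h : ∀ ψ : C_c(X, ℝ), ∫ x, ψ x * f x ∂ν = ∫ x, ψ x * g x ∂ρ) :
    ν.withDensity (fun x => ENNReal.ofReal (f x)) =
      ρ.withDensity fun x => ENNReal.ofReal (g x) := by
  have := isFiniteMeasure_withDensity_ofReal hf.2
  have := isFiniteMeasure_withDensity_ofReal hg.2
  refine Measure.ext_of_integral_eq_on_compactlySupported fun ψ => ?_
  rw [integral_withDensity_ofReal_s2 hf.aemeasurable hf0,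
    integral_withDensity_ofReal_s2 hg.aemeasurable hg0]
  simpa only [smul_eq_mul, mul_comm] using h ψ

theorem mul_ae_eq_of_withDensity_add_eq {ρ σ : Measure X} [SigmaFinite ρ] {f w g : X → ℝ≥0∞}
    (hf : AEMeasurable f ρ) (hw : AEMeasurable w ρ) (hg : AEMeasurable g ρ) (hσ : σ ⟂ₘ ρ)
    (h : (ρ.withDensity f + σ).withDensity w = ρ.withDensity g) : f * w =ᵐ[ρ] g := by
  rw [withDensity_add_measure, ← withDensity_mul₀ hf hw] at h
  exact (Measure.eq_rnDeriv₀ (hf.mul hw) hσ.withDensity (h.symm.trans (add_comm _ _))).trans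
    (Measure.rnDeriv_withDensity₀ ρ hg)

theorem norm_one_div_le_of_ofReal_mul_eq {x y z c : ℝ} (hc : 0 < c) (hcz : c ≤ z)
    (h : ENNReal.ofReal x * ENNReal.ofReal y = ENNReal.ofReal z) : ‖1 / y‖ ≤ x / c := by
  have hz : 0 < z := hc.trans_le hcz
  have hxy : 0 < x ∧ 0 < y := by
    have : ENNReal.ofReal x * ENNReal.ofReal y ≠ 0 := by
      rw [h]; exact (ENNReal.ofReal_pos.2 hz).ne'
    simpa only [ne_eq, mul_eq_zero, ENNReal.ofReal_eq_zero, not_or, not_le] using this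
  have hxyz : x * y = z := by
    rwa [← ENNReal.ofReal_mul hxy.1.le,
      ENNReal.ofReal_eq_ofReal_iff (mul_pos hxy.1 hxy.2).le hz.le] at h
  rw [Real.norm_of_nonneg (one_div_pos.2 hxy.2).le, div_le_div_iff₀ hxy.2 hc]
  linarith

theorem integrable_one_div_of_withDensity_add_eq {ρ σ : Measure X} [SigmaFinite ρ]
    {f d g : X → ℝ} {c : ℝ} (hc : 0 < c) (hf : Integrable f ρ) (hd : AEMeasurable d ρ)
    (hg : AEMeasurable g ρ) (hcg : ∀ᵐ x ∂ρ, c ≤ g x) (hσ : σ ⟂ₘ ρ)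
    (h : (ρ.withDensity (fun x => ENNReal.ofReal (f x)) + σ).withDensity
      (fun x => ENNReal.ofReal (d x)) = ρ.withDensity fun x => ENNReal.ofReal (g x)) :
    Integrable (fun x => 1 / d x) ρ := by
  have hfdg := mul_ae_eq_of_withDensity_add_eq hf.aemeasurable.ennreal_ofReal hd.ennreal_ofReal
    hg.ennreal_ofReal hσ h
  refine (hf.div_const c).mono' (hd.const_div 1).aestronglyMeasurable ?_
  filter_upwards [hfdg, hcg] with x hx hcx
  exact norm_one_div_le_of_ofReal_mul_eq hc hcx hx

end Measure

theorem stmt2_general {n : ℕ} (Ω : Set (EuclideanSpace ℝ (Fin n)))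
    (hΩopen : IsOpen Ω) (hΩbdd : Bornology.IsBounded Ω)
    (a : EuclideanSpace ℝ (Fin n) → ℝ) (ha : ContinuousOn a (closure Ω))
    (ha_max : ∀ y ∈ closure Ω, a y ≤ a 0)
    (μ : ℝ) (hμ : 0 < μ)
    (M : EuclideanSpace ℝ (Fin n) → EuclideanSpace ℝ (Fin n) → ℝ)
    (hM : ContinuousOn (fun p : EuclideanSpace ℝ (Fin n) × EuclideanSpace ℝ (Fin n) => M p.1 p.2)
      (closure Ω ×ˢ closure Ω))
    (m₀ : ℝ) (hm₀ : 0 < m₀)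
    (hMlow : ∀ y ∈ closure Ω, ∀ z ∈ closure Ω, m₀ ≤ M y z)
    (hnotL1 : ¬ IntegrableOn (fun y => 1 / (a 0 - a y)) Ω)
    (φ : Measure (EuclideanSpace ℝ (Fin n))) [IsFiniteMeasure φ]
    (hφsupp : φ (closure Ω)ᶜ = 0) (hφnt : 0 < φ (closure Ω))
    (fac : EuclideanSpace ℝ (Fin n) → ℝ)
    (hfac_int : IntegrableOn fac Ω)
    (φs : Measure (EuclideanSpace ℝ (Fin n)))
    (hsing : φs ⟂ₘ (volume.restrict Ω))
    (hdecomp : φ = (volume.restrict Ω).withDensity (fun y => ENNReal.ofReal (fac y)) + φs)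
    (hsol : ∀ ψ : EuclideanSpace ℝ (Fin n) → ℝ, Continuous ψ → HasCompactSupport ψ →
      (∫ y in Ω, ψ y * (μ * ∫ z, M y z ∂φ)) +
        (∫ y, ψ y * (a y - μ + (-(a 0 - μ))) ∂φ) = 0) :
    False := by
  have hK : IsCompact (closure Ω) := hΩbdd.isCompact_closure
  have hΩ : MeasurableSet Ω := hΩopen.measurableSet
  have hφK : ∀ᵐ z ∂φ, z ∈ closure Ω := ae_iff.2 hφsupp
  have hρK : ∀ᵐ y ∂volume.restrict Ω, y ∈ closure Ω :=
    (ae_restrict_mem hΩ).mono fun _ => (subset_closure ·)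
  have hMφ : ContinuousOn (fun y => μ * ∫ z, M y z ∂φ) (closure Ω) :=
    continuousOn_const.mul (hM.continuousOn_integral isClosed_closure hK hφK)
  set c := μ * (m₀ * φ.real (closure Ω))
  have hc : 0 < c := mul_pos hμ (mul_pos hm₀ (ENNReal.toReal_pos hφnt.ne' (measure_ne_top _ _)))
  have hMφ_ge : ∀ y ∈ closure Ω, c ≤ μ * ∫ z, M y z ∂φ := fun y hy => by
    refine mul_le_mul_of_nonneg_left ?_ hμ.le
    refine (setIntegral_ge_of_const_le_real isClosed_closure.measurableSet (measure_ne_top _ _)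
      (hMlow y hy) ((hM.comp (Continuous.prodMk_right y).continuousOn
        fun z hz => mk_mem_prod hy hz).integrableOn_compact (μ := φ) hK)).trans_eq ?_
    rw [Measure.restrict_eq_self_of_ae_mem hφK]
  have hmeas := withDensity_ofReal_eq_of_forall_integral_mul_eq
    ((continuousOn_const.sub ha).integrable_of_ae_mem_isCompact (f := (a 0 - a ·)) hK hφK)
    (hMφ.integrable_of_ae_mem_isCompact hK hρK)
    (hφK.mono fun y hy => sub_nonneg.2 (ha_max y hy))
    (hρK.mono fun y hy => hc.le.trans (hMφ_ge y hy)) fun ψ => by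
      have hφ : ∫ y, ψ y * (a y - μ + -(a 0 - μ)) ∂φ = -∫ y, ψ y * (a 0 - a y) ∂φ := by
        rw [← integral_neg]; congr 1; ext y; ring
      linarith [hsol ψ ψ.continuous ψ.hasCompactSupport]
  exact hnotL1 <| integrable_one_div_of_withDensity_add_eq hc hfac_int
    (((continuousOn_const.sub ha).mono subset_closure).aemeasurable hΩ)
    ((hMφ.mono subset_closure).aemeasurable hΩ) (hρK.mono hMφ_ge) hsing (by rwa [← hdecomp])

/-- If 1/(sup a − a) ∉ L¹(Ω), then there is no nonnegative nontrivial measure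
solution φ = φ_ac·dy + φ_s of μ(M⋆φ − φ) + (a+λ)φ = 0 with λ = −(sup a − μ):
assuming such a solution exists leads to a contradiction, since then
φ_ac(y) = μ(M⋆φ)(y)/(sup a − a(y)) ≥ μ m₀ (∫φ)/(sup a − a(y)) would fail to be in L¹(Ω). -/
theorem stmt2 {n : ℕ} (Ω : Set (EuclideanSpace ℝ (Fin n)))
    (hΩopen : IsOpen Ω) (hΩbdd : Bornology.IsBounded Ω)
    (h0 : (0 : EuclideanSpace ℝ (Fin n)) ∈ Ω)
    (a : EuclideanSpace ℝ (Fin n) → ℝ) (ha : ContinuousOn a (closure Ω))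
    (ha_nonconst : ∃ y ∈ closure Ω, a y ≠ a 0)
    (ha_max : ∀ y ∈ closure Ω, a y ≤ a 0)
    (μ : ℝ) (hμ : 0 < μ)
    (M : EuclideanSpace ℝ (Fin n) → EuclideanSpace ℝ (Fin n) → ℝ)
    (hM : ContinuousOn (fun p : EuclideanSpace ℝ (Fin n) × EuclideanSpace ℝ (Fin n) => M p.1 p.2)
      (closure Ω ×ˢ closure Ω))
    (m₀ : ℝ) (hm₀ : 0 < m₀)
    (hMlow : ∀ y ∈ closure Ω, ∀ z ∈ closure Ω, m₀ ≤ M y z)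
    (hnotL1 : ¬ IntegrableOn (fun y => 1 / (a 0 - a y)) Ω)
    (φ : Measure (EuclideanSpace ℝ (Fin n))) [IsFiniteMeasure φ]
    (hφsupp : φ (closure Ω)ᶜ = 0) (hφnt : 0 < φ (closure Ω))
    (fac : EuclideanSpace ℝ (Fin n) → ℝ)
    (hfac_int : IntegrableOn fac Ω) (hfac_nonneg : ∀ y, 0 ≤ fac y)
    (φs : Measure (EuclideanSpace ℝ (Fin n))) [IsFiniteMeasure φs]
    (hsing : φs ⟂ₘ (volume.restrict Ω))
    (hdecomp : φ = (volume.restrict Ω).withDensity (fun y => ENNReal.ofReal (fac y)) + φs)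
    (hsol : ∀ ψ : EuclideanSpace ℝ (Fin n) → ℝ, Continuous ψ → HasCompactSupport ψ →
      (∫ y in Ω, ψ y * (μ * ∫ z, M y z ∂φ)) +
        (∫ y, ψ y * (a y - μ + (-(a 0 - μ))) ∂φ) = 0) :
    False :=
  stmt2_general Ω hΩopen hΩbdd a ha ha_max μ hμ M hM m₀ hm₀ hMlow hnotL1 φ hφsupp hφnt fac hfac_int
    φs hsing hdecomp hsol
end

section
/- Let ε > 0 and λ₁^ε < 0, where (λ₁^ε, φ^ε) is the positive Neumann principal eigenpair of −εΔφ − μ(M⋆φ − φ) = (a + λ)φ. Let p be a positive solution to the stationary problem −εΔp − μ(M⋆p − p) = p(a(y) − K⋆p) with Neumann conditions. Then ∫_Ω p(y)dy ≥ (−λ₁^ε)/k_∞, where k_∞ := sup K. -/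
open MeasureTheory Set

/-- The Laplacian of `f : ℝⁿ → ℝ`, as the trace of the second derivative. -/
noncomputable def lap {n : ℕ} (f : EuclideanSpace ℝ (Fin n) → ℝ)
    (y : EuclideanSpace ℝ (Fin n)) : ℝ :=
  ∑ i : Fin n, iteratedFDeriv ℝ 2 f y (fun _ => EuclideanSpace.single i 1)

/-!
Suppose `k∞ ∫ p < -λ₁`. Let `α φ` be the largest multiple of `φ` below `p` on `Ω̄`, touching it
at `y₀`. Subtracting `α` times the eigenvalue equation from the equation of `p`, the nonlocal
terms have a sign and `w = p - α φ ≥ 0` satisfies `Δw ≤ C w - δ` in `Ω` with `δ > 0`, because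
`p (K⋆p + λ₁) ≤ p (k∞ ∫ p + λ₁) < 0`. Hence `w` has no zero in `Ω`, since there `Δw ≥ 0`. So
`y₀ ∈ ∂Ω`, and the Hopf lemma at `y₀` gives `∂_ν w (y₀) < 0`, against the Neumann conditions
for `p` and `φ`.
-/

open Filter Topology Metric Laplacian InnerProductSpace

/-- A local minimum with `f'' < 0` would also be a local maximum by the second-derivative test,
making `f` locally constant. -/
theorem IsLocalMin.deriv_deriv_nonneg {f : ℝ → ℝ} {x : ℝ} (h : IsLocalMin f x)
    (hc : ContinuousAt f x) : 0 ≤ deriv (deriv f) x := by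
  by_contra! hneg
  have hconst : f =ᶠ[𝓝 x] fun _ => f x :=
    ((isLocalMax_of_deriv_deriv_neg hneg h.deriv_eq_zero hc).and h).mono
      fun y hy => le_antisymm hy.1 hy.2
  have := hconst.deriv.deriv_eq
  simp only [deriv_const'] at this
  exact hneg.ne this

section SecondDerivative

variable {E : Type*} [NormedAddCommGroup E] [NormedSpace ℝ E]

theorem deriv_deriv_comp_add_smul {f : E → ℝ} (hf : ContDiff ℝ 2 f) (x v : E) :
    deriv (deriv fun t : ℝ => f (x + t • v)) 0 = iteratedFDeriv ℝ 2 f x ![v, v] := by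
  have hline : ∀ t : ℝ, HasDerivAt (fun s : ℝ => x + s • v) v t := fun t => by
    simpa using ((hasDerivAt_id t).smul_const v).const_add x
  have hdf : ∀ t : ℝ, deriv (fun t : ℝ => f (x + t • v)) t = fderiv ℝ f (x + t • v) v :=
    fun t => ((hf.differentiable two_ne_zero _).hasFDerivAt.comp_hasDerivAt t (hline t)).deriv
  have hf' : Differentiable ℝ (fderiv ℝ f) :=
    (hf.fderiv_right one_add_one_eq_two.le).differentiable one_ne_zero
  rw [funext hdf, iteratedFDeriv_two_apply]
  have := ((hf' _).hasFDerivAt.clm_apply (hasFDerivAt_const v _)).comp_hasDerivAt 0 (hline 0)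
  simpa [Function.comp_def] using this.deriv

theorem IsLocalMin.iteratedFDeriv_two_nonneg {f : E → ℝ} {x : E} (h : IsLocalMin f x)
    (hf : ContDiff ℝ 2 f) (v : E) : 0 ≤ iteratedFDeriv ℝ 2 f x ![v, v] := by
  rw [← deriv_deriv_comp_add_smul hf]
  have hc : Continuous fun t : ℝ => x + t • v := by fun_prop
  exact (IsLocalMin.comp_continuous (g := fun t : ℝ => x + t • v) (b := 0) (by simpa using h)
    hc.continuousAt).deriv_deriv_nonneg (hf.continuous.comp hc).continuousAt

end SecondDerivative

section Laplacian

variable {E : Type*} [NormedAddCommGroup E] [InnerProductSpace ℝ E]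

theorem hasFDerivAt_norm_sub_sq (z x : E) :
    HasFDerivAt (fun y => ‖y - z‖ ^ 2) (2 • innerSL ℝ (x - z)) x := by
  simpa using ((hasFDerivAt_id x).sub_const z).norm_sq

variable [FiniteDimensional ℝ E]

theorem IsLocalMin.laplacian_nonneg {f : E → ℝ} {x : E} (h : IsLocalMin f x)
    (hf : ContDiff ℝ 2 f) : 0 ≤ Δ f x := by
  rw [laplacian_eq_iteratedFDeriv_stdOrthonormalBasis]
  exact Finset.sum_nonneg fun i _ => h.iteratedFDeriv_two_nonneg hf _

theorem laplacian_norm_sub_sq (z x : E) :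
    Δ (fun y => ‖y - z‖ ^ 2) x = 2 * Module.finrank ℝ E := by
  have hfd : fderiv ℝ (fun y => ‖y - z‖ ^ 2) = fun y => 2 • innerSL ℝ (y - z) :=
    funext fun y => (hasFDerivAt_norm_sub_sq z y).fderiv
  have hfd2 : fderiv ℝ (fderiv ℝ (fun y => ‖y - z‖ ^ 2)) x = 2 • innerSL ℝ := by
    rw [hfd]
    exact (((innerSL ℝ).hasFDerivAt.comp x ((hasFDerivAt_id x).sub_const z)).const_smul
      2).fderiv
  have hquad : ∀ v : E, ((2 • innerSL ℝ : E →L[ℝ] E →L[ℝ] ℝ) v) v = 2 * ‖v‖ ^ 2 := fun v => by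
    rw [smul_apply, smul_apply, innerSL_apply_apply, real_inner_self_eq_norm_sq, nsmul_eq_mul]
    norm_num
  rw [laplacian_eq_iteratedFDeriv_stdOrthonormalBasis]
  simp only [iteratedFDeriv_two_apply, hfd2, Matrix.cons_val_zero, Matrix.cons_val_one, hquad,
    OrthonormalBasis.norm_eq_one]
  simp [mul_comm]

theorem pos_of_laplacian_le_sub {U : Set E} (hU : IsOpen U) {w : E → ℝ} (hw : ContDiff ℝ 2 w)
    {C δ : ℝ} (hδ : 0 < δ) (hnn : ∀ x ∈ U, 0 ≤ w x) (hΔ : ∀ x ∈ U, Δ w x ≤ C * w x - δ)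
    {x : E} (hx : x ∈ U) : 0 < w x := by
  refine (hnn x hx).lt_of_ne fun hzero => ?_
  have hmin : IsLocalMin w x :=
    mem_of_superset (hU.mem_nhds hx) fun y hy => hzero ▸ hnn y hy
  have := hΔ x hx
  rw [← hzero, mul_zero] at this
  linarith [hmin.laplacian_nonneg hw]

theorem nonneg_of_laplacian_neg_of_frontier_nonneg {U : Set E} (hU : IsOpen U)
    (hUb : Bornology.IsBounded U) {u : E → ℝ} (hu : ContDiff ℝ 2 u)
    (hfr : ∀ x ∈ frontier U, 0 ≤ u x) (hΔ : ∀ x ∈ U, u x < 0 → Δ u x < 0) {x : E}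
    (hx : x ∈ closure U) : 0 ≤ u x := by
  by_contra! hneg
  obtain ⟨x₁, hx₁, hmin⟩ :=
    hUb.isCompact_closure.exists_isMinOn ⟨x, hx⟩ hu.continuous.continuousOn
  have hx₁neg : u x₁ < 0 := (hmin hx).trans_lt hneg
  have hx₁U : x₁ ∈ U := by
    by_contra hx₁U
    exact (hfr x₁ ⟨hx₁, by rwa [hU.interior_eq]⟩).not_gt hx₁neg
  have hloc : IsLocalMin u x₁ := (hmin.on_subset subset_closure).isLocalMin (hU.mem_nhds hx₁U)
  exact (hloc.laplacian_nonneg hu).not_gt (hΔ x₁ hx₁U hx₁neg)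

theorem laplacian_add_mul_norm_sub_sq_sub_sq {w : E → ℝ} (hw : ContDiff ℝ 2 w) (A r : ℝ)
    (z x : E) : Δ (fun y => w y + A * (‖y - z‖ ^ 2 - r ^ 2)) x
      = Δ w x + A * (2 * Module.finrank ℝ E) := by
  set q : E → ℝ := fun y => ‖y - z‖ ^ 2
  have hq : ContDiff ℝ 2 q := (contDiff_norm_sq ℝ).comp (contDiff_id.sub contDiff_const)
  have hAq : ContDiff ℝ 2 (A • q) := hq.const_smul A
  have hwAq : ContDiffAt ℝ 2 (w + A • q) x := (hw.add hAq).contDiffAt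
  have hsplit : (fun y => w y + A * (q y - r ^ 2)) = (w + A • q) - fun _ => A * r ^ 2 := by
    ext y; simp only [Pi.add_apply, Pi.sub_apply, Pi.smul_apply, smul_eq_mul]; ring
  rw [hsplit, hwAq.laplacian_sub contDiffAt_const, hw.contDiffAt.laplacian_add hAq.contDiffAt,
    laplacian_smul _ hq.contDiffAt, laplacian_norm_sub_sq, laplacian_const]
  simp

theorem add_mul_norm_sub_sq_sub_sq_nonneg {w : E → ℝ} {z : E} {r C δ A : ℝ}
    (hw : ContDiff ℝ 2 w) (hr : 0 < r) (hC : 0 ≤ C) (hA : 0 ≤ A)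
    (hAδ : A * (C * r ^ 2 + 2 * Module.finrank ℝ E) < δ)
    (hnn : ∀ x ∈ closedBall z r, 0 ≤ w x) (hΔ : ∀ x ∈ ball z r, Δ w x ≤ C * w x - δ) {x : E}
    (hx : x ∈ closedBall z r) : 0 ≤ w x + A * (‖x - z‖ ^ 2 - r ^ 2) := by
  have hu : ContDiff ℝ 2 fun x => w x + A * (‖x - z‖ ^ 2 - r ^ 2) :=
    hw.add (contDiff_const.mul
      (((contDiff_norm_sq ℝ).comp (contDiff_id.sub contDiff_const)).sub contDiff_const))
  rw [← closure_ball z hr.ne'] at hx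
  refine nonneg_of_laplacian_neg_of_frontier_nonneg isOpen_ball isBounded_ball hu
    (fun x hx => ?_) (fun x hx hux => ?_) hx
  · rw [frontier_ball z hr.ne', mem_sphere_iff_norm] at hx
    simpa [hx] using hnn x (sphere_subset_closedBall (mem_sphere_iff_norm.2 hx))
  · have hwle : w x ≤ A * r ^ 2 := by nlinarith [sq_nonneg ‖x - z‖]
    have := mul_le_mul_of_nonneg_left hwle hC
    rw [laplacian_add_mul_norm_sub_sq_sub_sq hw]
    linarith [hΔ x hx]

/-- Hopf's lemma. The slack `δ` lets the quadratic barrier `w + A (‖x - z‖² - r²)` stay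
nonnegative on the ball; it vanishes at `y`, so its derivative towards the centre is nonnegative
there. -/
theorem fderiv_apply_neg_of_laplacian_le {w : E → ℝ} {y ν : E} {r C δ : ℝ}
    (hw : ContDiff ℝ 2 w) (hr : 0 < r) (hν : ‖ν‖ = 1) (hC : 0 ≤ C) (hδ : 0 < δ)
    (hnn : ∀ x ∈ closedBall (y - r • ν) r, 0 ≤ w x) (hy : w y = 0)
    (hΔ : ∀ x ∈ ball (y - r • ν) r, Δ w x ≤ C * w x - δ) : fderiv ℝ w y ν < 0 := by
  set z := y - r • ν
  set d : ℝ := (Module.finrank ℝ E : ℝ)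
  set A := δ / (C * r ^ 2 + 2 * d + 1)
  have hA : 0 < A := by positivity
  have hAδ : A * (C * r ^ 2 + 2 * d) < δ := by
    have : A * (C * r ^ 2 + 2 * d + 1) = δ := div_mul_cancel₀ _ (by positivity)
    linarith
  set u : E → ℝ := fun x => w x + A * (‖x - z‖ ^ 2 - r ^ 2)
  have hyz : y - z = r • ν := by simp [z]
  have hy_mem : y ∈ closedBall z r := by
    rw [mem_closedBall_iff_norm, hyz, norm_smul, hν, Real.norm_of_nonneg hr.le, mul_one]
  have huy : u y = 0 := by
    simp [u, hy, hyz, norm_smul, hν, abs_of_pos hr]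
  have hmin : IsLocalMinOn u (closedBall z r) y := IsMinOn.localize fun x hx =>
    huy ▸ add_mul_norm_sub_sq_sub_sq_nonneg hw hr hC hA.le hAδ hnn hΔ hx
  have hderiv : HasFDerivAt u (fderiv ℝ w y + A • (2 • innerSL ℝ (y - z))) y :=
    (hw.differentiable two_ne_zero y).hasFDerivAt.add
      (((hasFDerivAt_norm_sub_sq z y).sub_const _).const_mul A)
  have hcone : z - y ∈ posTangentConeAt (closedBall z r) y :=
    mem_posTangentConeAt_of_segment_subset <| (convex_closedBall z r).segment_subset hy_mem
      (by simpa using hr.le)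
  have hzy : z - y = -(r • ν) := by simp [z]
  have key : A * (2 * (r * r)) ≤ -(r * fderiv ℝ w y ν) := by
    simpa [hzy, hyz, inner_smul_right, hν] using
      hmin.hasFDerivWithinAt_nonneg hderiv.hasFDerivWithinAt hcone
  nlinarith [mul_pos hA (mul_pos hr hr)]

end Laplacian

theorem lap_eq_laplacian {n : ℕ} (f : EuclideanSpace ℝ (Fin n) → ℝ) : lap f = Δ f := by
  rw [laplacian_eq_iteratedFDeriv_orthonormalBasis f (EuclideanSpace.basisFun (Fin n) ℝ)]
  ext y
  refine Finset.sum_congr rfl fun i _ => ?_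
  congr 1
  ext j
  fin_cases j <;> simp

theorem setIntegral_mul_le_mul_setIntegral {X : Type*} [TopologicalSpace X] [T2Space X]
    [MeasurableSpace X] [OpensMeasurableSpace X] {μ : Measure X} [IsFiniteMeasureOnCompacts μ]
    {s : Set X} (hs : IsCompact (closure s)) (hsm : MeasurableSet s) {k f : X → ℝ} {c : ℝ}
    (hk : ContinuousOn k (closure s)) (hf : ContinuousOn f (closure s))
    (hkc : ∀ x ∈ s, k x ≤ c) (hf0 : ∀ x ∈ s, 0 ≤ f x) :
    ∫ x in s, k x * f x ∂μ ≤ c * ∫ x in s, f x ∂μ := by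
  have hint : ∀ g : X → ℝ, ContinuousOn g (closure s) → IntegrableOn g s μ := fun g hg =>
    (hg.integrableOn_compact hs).mono_set subset_closure
  rw [← integral_const_mul]
  exact setIntegral_mono_on (hint _ (hk.mul hf)) (hint _ (continuousOn_const.mul hf)) hsm
    fun x hx => mul_le_mul_of_nonneg_right (hkc x hx) (hf0 x hx)

theorem IsCompact.exists_mul_le_with_eq {X : Type*} [TopologicalSpace X] {K : Set X}
    (hK : IsCompact K) (hne : K.Nonempty) {p φ : X → ℝ} (hp : ContinuousOn p K)
    (hφ : ContinuousOn φ K) (hφpos : ∀ x ∈ K, 0 < φ x) :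
    ∃ α : ℝ, ∃ x₀ ∈ K, (∀ x ∈ K, α * φ x ≤ p x) ∧ α * φ x₀ = p x₀ := by
  obtain ⟨x₀, hx₀, hmin⟩ := hK.exists_isMinOn hne (hp.div hφ fun x hx => (hφpos x hx).ne')
  refine ⟨p x₀ / φ x₀, x₀, hx₀, fun x hx => ?_, div_mul_cancel₀ _ (hφpos x₀ hx₀).ne'⟩
  exact (le_div_iff₀ (hφpos x hx)).1 (hmin hx)

section Supersolution

variable {E : Type*} [NormedAddCommGroup E] [InnerProductSpace ℝ E] [FiniteDimensional ℝ E]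
  [MeasureSpace E] [BorelSpace E] [IsFiniteMeasureOnCompacts (volume : Measure E)]

theorem exists_laplacian_sub_smul_le {Ω : Set E} (hΩ : IsOpen Ω) (hΩc : IsCompact (closure Ω))
    (hΩne : Ω.Nonempty) {a p φ : E → ℝ} {M K : E → E → ℝ} {μ ε lam kinf α : ℝ}
    (hμ : 0 ≤ μ) (hε : 0 < ε) (ha : ContinuousOn a (closure Ω))
    (hM : ContinuousOn (fun q : E × E => M q.1 q.2) (closure Ω ×ˢ closure Ω))
    (hMnonneg : ∀ y ∈ closure Ω, ∀ z ∈ closure Ω, 0 ≤ M y z)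
    (hK : ContinuousOn (fun q : E × E => K q.1 q.2) (closure Ω ×ˢ closure Ω))
    (hKup : ∀ y ∈ closure Ω, ∀ z ∈ closure Ω, K y z ≤ kinf)
    (hp : ContDiff ℝ 2 p) (hφ : ContDiff ℝ 2 φ) (hppos : ∀ y ∈ closure Ω, 0 < p y)
    (heig : ∀ y ∈ Ω,
      -ε * Δ φ y - μ * ((∫ z in closure Ω, M y z * φ z) - φ y) = (a y + lam) * φ y)
    (heq : ∀ y ∈ Ω,
      -ε * Δ p y - μ * ((∫ z in closure Ω, M y z * p z) - p y)
        = p y * (a y - (∫ z in Ω, K y z * p z)))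
    (hαφ : ∀ y ∈ closure Ω, α * φ y ≤ p y) (hlt : kinf * ∫ y in Ω, p y < -lam) :
    ∃ C ≥ 0, ∃ δ > 0, ∀ y ∈ Ω, Δ (p - α • φ) y ≤ C * (p - α • φ) y - δ := by
  obtain ⟨ym, hym, hpmin⟩ :=
    hΩc.exists_isMinOn (hΩne.mono subset_closure) hp.continuous.continuousOn
  obtain ⟨ya, hya, hamin⟩ := hΩc.exists_isMinOn (hΩne.mono subset_closure) ha
  set C := max (μ - a ya - lam) 0
  set c := -lam - kinf * ∫ y in Ω, p y
  set δ := p ym * c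
  have hδ : 0 < δ := mul_pos (hppos ym hym) (by linarith)
  refine ⟨C / ε, by positivity, δ / ε, by positivity, fun y hy => ?_⟩
  have hy' := subset_closure hy
  have hslice : ContinuousOn (fun z => (y, z)) (closure Ω) :=
    continuousOn_const.prodMk continuousOn_id
  have hMy : ContinuousOn (M y) (closure Ω) := hM.comp hslice fun z hz => ⟨hy', hz⟩
  have hKy : ContinuousOn (K y) (closure Ω) := hK.comp hslice fun z hz => ⟨hy', hz⟩
  have hMw : α * ∫ z in closure Ω, M y z * φ z ≤ ∫ z in closure Ω, M y z * p z := by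
    rw [← integral_const_mul]
    refine setIntegral_mono_on
      (((hMy.mul hφ.continuous.continuousOn).integrableOn_compact hΩc).const_mul α)
      ((hMy.mul hp.continuous.continuousOn).integrableOn_compact hΩc) measurableSet_closure
      fun z hz => ?_
    nlinarith [hMnonneg y hy' z hz, hαφ z hz]
  have hKp : ∫ z in Ω, K y z * p z ≤ kinf * ∫ z in Ω, p z :=
    setIntegral_mul_le_mul_setIntegral hΩc hΩ.measurableSet hKy hp.continuous.continuousOn
      (fun z hz => hKup y hy' z (subset_closure hz)) fun z hz => (hppos z (subset_closure hz)).le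
  have hsplit : ε * Δ (p - α • φ) y =
      -(μ * ((∫ z in closure Ω, M y z * p z) - α * ∫ z in closure Ω, M y z * φ z))
      + (μ - a y - lam) * (p y - α * φ y) + p y * ((∫ z in Ω, K y z * p z) + lam) := by
    have hαφ' : ContDiffAt ℝ 2 (α • φ) y := hφ.contDiffAt.const_smul α
    rw [hp.contDiffAt.laplacian_sub hαφ', laplacian_smul _ hφ.contDiffAt, smul_eq_mul]
    linear_combination (-1 : ℝ) * heq y hy + α * heig y hy
  have hnonlocal :
      0 ≤ μ * ((∫ z in closure Ω, M y z * p z) - α * ∫ z in closure Ω, M y z * φ z) :=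
    mul_nonneg hμ (by linarith)
  have hlinear : (μ - a y - lam) * (p y - α * φ y) ≤ C * (p y - α * φ y) := by
    have hay : a ya ≤ a y := hamin hy'
    exact mul_le_mul_of_nonneg_right ((by linarith : μ - a y - lam ≤ _).trans (le_max_left _ _))
      (sub_nonneg.2 (hαφ y hy'))
  have hcompetition : p y * ((∫ z in Ω, K y z * p z) + lam) ≤ -δ := by
    calc p y * ((∫ z in Ω, K y z * p z) + lam) ≤ p y * -c :=
          mul_le_mul_of_nonneg_left (by linarith) (hppos y hy').le
      _ ≤ p ym * -c := mul_le_mul_of_nonpos_right (hpmin hy') (by linarith)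
      _ = -δ := mul_neg _ _
  have hw : (p - α • φ) y = p y - α * φ y := rfl
  rw [hw, div_mul_eq_mul_div, ← sub_div, le_div_iff₀ hε, mul_comm]
  linarith

end Supersolution

theorem stmt8_general {n : ℕ} (Ω : Set (EuclideanSpace ℝ (Fin n)))
    (hΩopen : IsOpen Ω) (hΩbdd : Bornology.IsBounded Ω) (hΩne : Ω.Nonempty)
    (ν : EuclideanSpace ℝ (Fin n) → EuclideanSpace ℝ (Fin n))
    (hν_unit : ∀ y ∈ frontier Ω, ‖ν y‖ = 1)
    (hν_out : ∀ y ∈ frontier Ω, ∃ r > (0:ℝ), Metric.ball (y - r • ν y) r ⊆ Ω)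
    (a : EuclideanSpace ℝ (Fin n) → ℝ) (ha : ContinuousOn a (closure Ω))
    (μ ε : ℝ) (hμ : 0 < μ) (hε : 0 < ε)
    (M K : EuclideanSpace ℝ (Fin n) → EuclideanSpace ℝ (Fin n) → ℝ)
    (hM : ContinuousOn (fun p : EuclideanSpace ℝ (Fin n) × EuclideanSpace ℝ (Fin n) => M p.1 p.2)
      (closure Ω ×ˢ closure Ω))
    (hMpos : ∀ y ∈ closure Ω, ∀ z ∈ closure Ω, 0 < M y z)
    (hK : ContinuousOn (fun p : EuclideanSpace ℝ (Fin n) × EuclideanSpace ℝ (Fin n) => K p.1 p.2)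
      (closure Ω ×ˢ closure Ω))
    (kinf : ℝ) (hkinf_pos : 0 < kinf)
    (hKup : ∀ y ∈ closure Ω, ∀ z ∈ closure Ω, K y z ≤ kinf)
    -- the principal eigenpair
    (lam : ℝ)
    (φ : EuclideanSpace ℝ (Fin n) → ℝ)
    (hφreg : ContDiff ℝ 2 φ) (hφpos : ∀ y ∈ closure Ω, 0 < φ y)
    (heig : ∀ y ∈ Ω,
      -ε * lap φ y - μ * ((∫ z in closure Ω, M y z * φ z) - φ y) = (a y + lam) * φ y)
    (hφNeumann : ∀ y ∈ frontier Ω, fderiv ℝ φ y (ν y) = 0)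
    -- the stationary solution
    (p : EuclideanSpace ℝ (Fin n) → ℝ)
    (hpreg : ContDiff ℝ 2 p) (hppos : ∀ y ∈ closure Ω, 0 < p y)
    (heq : ∀ y ∈ Ω,
      -ε * lap p y - μ * ((∫ z in closure Ω, M y z * p z) - p y)
        = p y * (a y - (∫ z in Ω, K y z * p z)))
    (hpNeumann : ∀ y ∈ frontier Ω, fderiv ℝ p y (ν y) = 0) :
    (-lam) / kinf ≤ ∫ y in Ω, p y := by
  by_contra! hlt
  replace hlt : kinf * ∫ y in Ω, p y < -lam := by
    rw [lt_div_iff₀ hkinf_pos] at hlt; linarith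
  have hΩc : IsCompact (closure Ω) := hΩbdd.isCompact_closure
  obtain ⟨α, y₀, hy₀, hαφ, hαy₀⟩ := hΩc.exists_mul_le_with_eq (hΩne.mono subset_closure)
    hpreg.continuous.continuousOn hφreg.continuous.continuousOn hφpos
  simp only [lap_eq_laplacian] at heig heq
  obtain ⟨C, hC, δ, hδ, hΔw⟩ := exists_laplacian_sub_smul_le hΩopen hΩc hΩne hμ.le hε ha hM
    (fun y hy z hz => (hMpos y hy z hz).le) hK hKup hpreg hφreg hppos heig heq hαφ hlt
  set w := p - α • φ
  have hw_nonneg : ∀ y ∈ closure Ω, 0 ≤ w y := fun y hy => sub_nonneg.2 (hαφ y hy)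
  have hw₀ : w y₀ = 0 := sub_eq_zero.2 hαy₀.symm
  have hw : ContDiff ℝ 2 w := hpreg.sub (hφreg.const_smul α)
  have hfr : y₀ ∈ frontier Ω := ⟨hy₀, fun hy₀Ω => (pos_of_laplacian_le_sub hΩopen hw hδ
    (fun y hy => hw_nonneg y (subset_closure hy)) hΔw (hΩopen.interior_eq ▸ hy₀Ω)).ne' hw₀⟩
  obtain ⟨r, hr, hball⟩ := hν_out y₀ hfr
  have hclosedBall : closedBall (y₀ - r • ν y₀) r ⊆ closure Ω :=
    closure_ball (y₀ - r • ν y₀) hr.ne' ▸ closure_mono hball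
  have hHopf := fderiv_apply_neg_of_laplacian_le hw hr (hν_unit y₀ hfr) hC hδ
    (fun x hx => hw_nonneg x (hclosedBall hx)) hw₀ fun x hx => hΔw x (hball hx)
  have hdw : HasFDerivAt w (fderiv ℝ p y₀ - α • fderiv ℝ φ y₀) y₀ :=
    (hpreg.differentiable two_ne_zero y₀).hasFDerivAt.sub
      ((hφreg.differentiable two_ne_zero y₀).hasFDerivAt.const_smul α)
  rw [hdw.fderiv] at hHopf
  simp [hpNeumann y₀ hfr, hφNeumann y₀ hfr] at hHopf

/-- Let (λ₁^ε, φ^ε) be the positive Neumann principal eigenpair of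
−εΔφ − μ(M⋆φ − φ) = (a + λ)φ with λ₁^ε < 0, and let p be a positive Neumann solution of
the stationary problem −εΔp − μ(M⋆p − p) = p(a − K⋆p). Then ∫_Ω p ≥ (−λ₁^ε)/k_∞,
where k_∞ = sup K. -/
theorem stmt8 {n : ℕ} (Ω : Set (EuclideanSpace ℝ (Fin n)))
    (hΩopen : IsOpen Ω) (hΩbdd : Bornology.IsBounded Ω) (hΩne : Ω.Nonempty)
    (hC3 : ∃ R > (0:ℝ), ContDiffOn ℝ 3 (fun y => Metric.infDist y (frontier Ω))
      {y ∈ closure Ω | Metric.infDist y (frontier Ω) < R})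
    (ν : EuclideanSpace ℝ (Fin n) → EuclideanSpace ℝ (Fin n))
    (hν_unit : ∀ y ∈ frontier Ω, ‖ν y‖ = 1)
    (hν_out : ∀ y ∈ frontier Ω, ∃ r > (0:ℝ), Metric.ball (y - r • ν y) r ⊆ Ω)
    (a : EuclideanSpace ℝ (Fin n) → ℝ) (ha : ContinuousOn a (closure Ω))
    (μ ε : ℝ) (hμ : 0 < μ) (hε : 0 < ε)
    (M K : EuclideanSpace ℝ (Fin n) → EuclideanSpace ℝ (Fin n) → ℝ)
    (hM : ContinuousOn (fun p : EuclideanSpace ℝ (Fin n) × EuclideanSpace ℝ (Fin n) => M p.1 p.2)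
      (closure Ω ×ˢ closure Ω))
    (hMpos : ∀ y ∈ closure Ω, ∀ z ∈ closure Ω, 0 < M y z)
    (hK : ContinuousOn (fun p : EuclideanSpace ℝ (Fin n) × EuclideanSpace ℝ (Fin n) => K p.1 p.2)
      (closure Ω ×ˢ closure Ω))
    (kinf : ℝ) (hkinf_pos : 0 < kinf)
    (hKpos : ∀ y ∈ closure Ω, ∀ z ∈ closure Ω, 0 < K y z)
    (hKup : ∀ y ∈ closure Ω, ∀ z ∈ closure Ω, K y z ≤ kinf)
    -- the principal eigenpair
    (lam : ℝ) (hlam : lam < 0)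
    (φ : EuclideanSpace ℝ (Fin n) → ℝ)
    (hφreg : ContDiff ℝ 2 φ) (hφpos : ∀ y ∈ closure Ω, 0 < φ y)
    (heig : ∀ y ∈ Ω,
      -ε * lap φ y - μ * ((∫ z in closure Ω, M y z * φ z) - φ y) = (a y + lam) * φ y)
    (hφNeumann : ∀ y ∈ frontier Ω, fderiv ℝ φ y (ν y) = 0)
    -- the stationary solution
    (p : EuclideanSpace ℝ (Fin n) → ℝ)
    (hpreg : ContDiff ℝ 2 p) (hppos : ∀ y ∈ closure Ω, 0 < p y)
    (hpint : IntegrableOn p Ω)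
    (heq : ∀ y ∈ Ω,
      -ε * lap p y - μ * ((∫ z in closure Ω, M y z * p z) - p y)
        = p y * (a y - (∫ z in Ω, K y z * p z)))
    (hpNeumann : ∀ y ∈ frontier Ω, fderiv ℝ p y (ν y) = 0) :
    (-lam) / kinf ≤ ∫ y in Ω, p y :=
  stmt8_general Ω hΩopen hΩbdd hΩne ν hν_unit hν_out a ha μ ε hμ hε M K hM hMpos hK kinf hkinf_pos
    hKup lam φ hφreg hφpos heig hφNeumann p hpreg hppos heq hpNeumann
end

section
/- Nonexistence below the principal eigenvalue: let λ₁^ε > 0 and let (λ₁^ε, φ^ε > 0) solve the Neumann eigenproblem −εΔφ − μ(M⋆φ − φ) = (a + λ₁^ε)φ. Then the only nonnegative bounded solution p of −εΔp − μ(M⋆p − p) = p(a(y) − K⋆p − βp) with Neumann conditions is p ≡ 0. -/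
/-!
Let `α` be the least multiple with `p ≤ α φ` on `Ω̄` (it exists since `p / φ` attains its maximum
on the compact set `Ω̄`). If `α ≤ 0` then `p ≡ 0`. Otherwise `w = α φ - p ≥ 0` vanishes at some
`y₀ ∈ Ω̄`. There the Hessian of `w` is positive semidefinite: at an interior point because `y₀` is a
local minimum, and at a boundary point because the Neumann condition kills the normal derivative
and every direction pointing into the interior ball is admissible, so the first- and second-order
conditions along rays extend to all directions by continuity. Hence `Δw(y₀) ≥ 0`, and also
`(M⋆w)(y₀) ≥ 0`, so subtracting the equation for `p` from `α` times the eigen-equation gives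
`0 ≥ λ₁ p(y₀) + p(y₀)(K⋆p)(y₀) + β p(y₀)² > 0`.
-/

open MeasureTheory Set

open Filter Topology Metric
open scoped RealInnerProductSpace

lemma nonneg_of_hasDerivAt_deriv_of_eventually_le {g g' : ℝ → ℝ} {L : ℝ}
    (hg : ∀ t, HasDerivAt g (g' t) t) (hg'0 : g' 0 = 0) (hg' : HasDerivAt g' L 0)
    (hmin : ∀ᶠ t in 𝓝[>] 0, g 0 ≤ g t) : 0 ≤ L := by
  by_contra! hL
  have hneg : ∀ᶠ t in 𝓝[>] 0, g' t < 0 := by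
    filter_upwards [hg'.tendsto_slope_zero_right.eventually (eventually_lt_nhds hL),
      self_mem_nhdsWithin] with t ht (htpos : 0 < t)
    simpa [hg'0, smul_eq_mul, mul_neg_iff, htpos, htpos.not_gt] using ht
  obtain ⟨u, hu, hsub⟩ := mem_nhdsGT_iff_exists_Ioo_subset.1 (hneg.and hmin)
  have hu2 : u / 2 ∈ Ioo 0 u := ⟨by simp_all, by simp_all⟩
  obtain ⟨ξ, hξ, hslope⟩ := exists_hasDerivAt_eq_slope g g' hu2.1
    (fun t _ => (hg t).continuousAt.continuousWithinAt) (fun t _ => hg t)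
  have hξneg : g' ξ < 0 := (hsub ⟨hξ.1, hξ.2.trans hu2.2⟩).1
  have hrise : 0 ≤ (g (u / 2) - g 0) / (u / 2 - 0) :=
    div_nonneg (sub_nonneg.2 (hsub hu2).2) (by linarith [hu2.1])
  linarith

section Ray

variable {V : Type*} [NormedAddCommGroup V] [NormedSpace ℝ V]

lemma fderiv_apply_nonneg_of_eventually_le {w : V → ℝ} {x v : V} (hw : DifferentiableAt ℝ w x)
    (hmin : ∀ᶠ t in 𝓝[>] (0:ℝ), w x ≤ w (x + t • v)) : 0 ≤ fderiv ℝ w x v := by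
  have hray : HasDerivAt (fun t : ℝ => w (x + t • v)) (fderiv ℝ w x v) 0 := by
    refine hw.hasFDerivAt.comp_hasDerivAt_of_eq (0:ℝ) ?_ (by simp)
    simpa using ((hasDerivAt_id (0:ℝ)).smul_const v).const_add x
  refine ge_of_tendsto hray.tendsto_slope_zero_right ?_
  filter_upwards [hmin, self_mem_nhdsWithin] with t ht (htpos : 0 < t)
  simpa using mul_nonneg (inv_nonneg.2 htpos.le) (sub_nonneg.2 ht)

lemma fderiv_fderiv_apply_nonneg_of_eventually_le {w : V → ℝ} {x v : V} (hw : ContDiff ℝ 2 w)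
    (hv : fderiv ℝ w x v = 0) (hmin : ∀ᶠ t in 𝓝[>] (0:ℝ), w x ≤ w (x + t • v)) :
    0 ≤ fderiv ℝ (fderiv ℝ w) x v v := by
  have hline : ∀ t : ℝ, HasDerivAt (fun s : ℝ => x + s • v) v t := fun t => by
    simpa using ((hasDerivAt_id t).smul_const v).const_add x
  have hw1 : Differentiable ℝ w := hw.differentiable two_ne_zero
  have hw2 : Differentiable ℝ (fderiv ℝ w) :=
    (hw.fderiv_right (m := 1) le_rfl).differentiable one_ne_zero
  have hg : ∀ t : ℝ, HasDerivAt (fun s => w (x + s • v)) (fderiv ℝ w (x + t • v) v) t :=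
    fun t => (hw1 _).hasFDerivAt.comp_hasDerivAt t (hline t)
  have hg' : HasDerivAt (fun t : ℝ => fderiv ℝ w (x + t • v) v)
      (fderiv ℝ (fderiv ℝ w) x v v) 0 := by
    have := ((hw2 _).hasFDerivAt.comp_hasDerivAt (0:ℝ) (hline 0)).clm_apply
      (hasDerivAt_const 0 v)
    simpa using this
  exact nonneg_of_hasDerivAt_deriv_of_eventually_le hg (by simpa using hv) hg'
    (by simpa using hmin)

end Ray

section HalfSpace

variable {E : Type*} [NormedAddCommGroup E] [InnerProductSpace ℝ E]

lemma eventually_add_smul_mem_closedBall {c x v : E} {r : ℝ} (hx : dist x c ≤ r)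
    (hv : ⟪x - c, v⟫ < 0) : ∀ᶠ t in 𝓝[>] (0:ℝ), x + t • v ∈ closedBall c r := by
  have hsmall : ∀ᶠ t in 𝓝 (0:ℝ), 2 * ⟪x - c, v⟫ + t * ‖v‖ ^ 2 < 0 :=
    (continuous_const.add (continuous_id.mul continuous_const)).continuousAt.eventually_lt
      continuousAt_const (by simp; linarith)
  filter_upwards [nhdsWithin_le_nhds hsmall, self_mem_nhdsWithin] with t ht (htpos : 0 < t)
  rw [mem_closedBall, dist_eq_norm, show x + t • v - c = (x - c) + t • v by abel]
  rw [dist_eq_norm] at hx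
  have hsq : ‖(x - c) + t • v‖ ^ 2 ≤ r ^ 2 := by
    rw [norm_add_sq_real, norm_smul, real_inner_smul_right, Real.norm_of_nonneg htpos.le]
    nlinarith [mul_neg_of_pos_of_neg htpos ht, norm_nonneg (x - c)]
  nlinarith [norm_nonneg ((x - c) + t • v), norm_nonneg (x - c)]

lemma nonneg_of_forall_inner_neg {f : E → ℝ} (hf : Continuous f) (heven : ∀ v, f (-v) = f v)
    {n : E} (hn : n ≠ 0) (h : ∀ v, ⟪n, v⟫ < 0 → 0 ≤ f v) (v : E) : 0 ≤ f v := by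
  have hclosed : ∀ v, ⟪n, v⟫ ≤ 0 → 0 ≤ f v := fun v hv => by
    have hlim : Tendsto (fun s : ℝ => f (v - s • n)) (𝓝[>] 0) (𝓝 (f v)) := by
      have : Continuous fun s : ℝ => f (v - s • n) := by fun_prop
      simpa using (this.tendsto 0).mono_left nhdsWithin_le_nhds
    refine ge_of_tendsto hlim ?_
    filter_upwards [self_mem_nhdsWithin] with s (hs : 0 < s)
    apply h
    rw [inner_sub_right, real_inner_smul_right, real_inner_self_eq_norm_sq]
    nlinarith [pow_pos (norm_pos_iff.2 hn) 2]
  rcases le_or_gt ⟪n, v⟫ 0 with hv | hv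
  · exact hclosed v hv
  · rw [← heven]
    exact hclosed (-v) (by rw [inner_neg_right]; linarith)

lemma ContinuousLinearMap.eq_zero_of_forall_inner_neg {ℓ : E →L[ℝ] ℝ} {n : E} (hn : n ≠ 0)
    (hℓn : ℓ n = 0) (h : ∀ v, ⟪n, v⟫ < 0 → 0 ≤ ℓ v) : ℓ = 0 := by
  have hnonneg : ∀ v, 0 ≤ ℓ v := fun v => by
    -- shifting along `n` does not change `ℓ v` but makes the direction inward
    have hshift : ⟪n, v - ((⟪n, v⟫ + 1) / ‖n‖ ^ 2) • n⟫ = -1 := by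
      rw [inner_sub_right, real_inner_smul_right, real_inner_self_eq_norm_sq,
        div_mul_cancel₀ _ (by positivity)]
      ring
    simpa [hℓn] using h _ (hshift.trans_lt (by norm_num))
  ext v
  exact le_antisymm (by simpa using hnonneg (-v)) (hnonneg v)

end HalfSpace

section SecondOrder

variable {E : Type*} [NormedAddCommGroup E] [InnerProductSpace ℝ E]

lemma IsLocalMin.fderiv_fderiv_apply_nonneg {w : E → ℝ} {x : E} (hw : ContDiff ℝ 2 w)
    (hmin : IsLocalMin w x) (v : E) : 0 ≤ fderiv ℝ (fderiv ℝ w) x v v := by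
  refine fderiv_fderiv_apply_nonneg_of_eventually_le hw (by simp [hmin.fderiv_eq_zero]) ?_
  have hray : Tendsto (fun t : ℝ => x + t • v) (𝓝[>] 0) (𝓝 x) := by
    have : Continuous fun t : ℝ => x + t • v := by fun_prop
    simpa using (this.tendsto 0).mono_left nhdsWithin_le_nhds
  exact hray.eventually hmin

lemma IsMinOn.fderiv_fderiv_apply_nonneg_of_closedBall_subset {w : E → ℝ} {S : Set E}
    {x c : E} {r : ℝ} (hw : ContDiff ℝ 2 w) (hmin : IsMinOn w S x)
    (hball : closedBall c r ⊆ S) (hx : dist x c ≤ r) (hxc : x ≠ c)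
    (hneu : fderiv ℝ w x (x - c) = 0) (v : E) : 0 ≤ fderiv ℝ (fderiv ℝ w) x v v := by
  have hray : ∀ v, ⟪x - c, v⟫ < 0 → ∀ᶠ t in 𝓝[>] (0:ℝ), w x ≤ w (x + t • v) := fun v hv =>
    (eventually_add_smul_mem_closedBall hx hv).mono fun t ht => hmin (hball ht)
  have hcrit : fderiv ℝ w x = 0 :=
    ContinuousLinearMap.eq_zero_of_forall_inner_neg (sub_ne_zero.2 hxc) hneu fun v hv =>
      fderiv_apply_nonneg_of_eventually_le (hw.differentiable two_ne_zero x) (hray v hv)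
  refine nonneg_of_forall_inner_neg (f := fun v => fderiv ℝ (fderiv ℝ w) x v v) (by fun_prop)
    (by simp) (sub_ne_zero.2 hxc) (fun v hv => ?_) v
  exact fderiv_fderiv_apply_nonneg_of_eventually_le hw (by simp [hcrit]) (hray v hv)

lemma IsMinOn.fderiv_fderiv_apply_nonneg_of_interior_ball {Ω : Set E} {ν : E → E}
    (hν_unit : ∀ y ∈ frontier Ω, ‖ν y‖ = 1)
    (hν_out : ∀ y ∈ frontier Ω, ∃ r > (0:ℝ), ball (y - r • ν y) r ⊆ Ω)
    {w : E → ℝ} (hw : ContDiff ℝ 2 w) (hneu : ∀ y ∈ frontier Ω, fderiv ℝ w y (ν y) = 0)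
    {y₀ : E} (hy₀ : y₀ ∈ closure Ω) (hmin : IsMinOn w (closure Ω) y₀) (v : E) :
    0 ≤ fderiv ℝ (fderiv ℝ w) y₀ v v := by
  by_cases hint : y₀ ∈ interior Ω
  · exact (hmin.isLocalMin (mem_of_superset (isOpen_interior.mem_nhds hint)
      (interior_subset.trans subset_closure))).fderiv_fderiv_apply_nonneg hw v
  have hfr : y₀ ∈ frontier Ω := ⟨hy₀, hint⟩
  obtain ⟨r, hr, hball⟩ := hν_out y₀ hfr
  have hshift : y₀ - (y₀ - r • ν y₀) = r • ν y₀ := sub_sub_cancel _ _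
  refine hmin.fderiv_fderiv_apply_nonneg_of_closedBall_subset hw
    ((closure_ball _ hr.ne').symm.subset.trans (closure_mono hball)) ?_ ?_ ?_ v
  · rw [dist_eq_norm, hshift, norm_smul, hν_unit y₀ hfr, Real.norm_of_nonneg hr.le, mul_one]
  · rw [← sub_ne_zero, hshift, smul_ne_zero_iff]
    exact ⟨hr.ne', norm_ne_zero_iff.1 (by rw [hν_unit y₀ hfr]; exact one_ne_zero)⟩
  · rw [hshift, map_smul, hneu y₀ hfr, smul_zero]

end SecondOrder

section Laplacian

variable {n : ℕ}

lemma lap_nonneg {w : EuclideanSpace ℝ (Fin n) → ℝ} {y : EuclideanSpace ℝ (Fin n)}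
    (h : ∀ v, 0 ≤ fderiv ℝ (fderiv ℝ w) y v v) : 0 ≤ lap w y :=
  Finset.sum_nonneg fun i _ => by rw [iteratedFDeriv_two_apply]; exact h _

lemma lap_sub {f g : EuclideanSpace ℝ (Fin n) → ℝ} {y : EuclideanSpace ℝ (Fin n)}
    (hf : ContDiffAt ℝ 2 f y) (hg : ContDiffAt ℝ 2 g y) :
    lap (f - g) y = lap f y - lap g y := by
  simp [lap, iteratedFDeriv_sub_apply hf hg, Finset.sum_sub_distrib]

lemma lap_const_smul {f : EuclideanSpace ℝ (Fin n) → ℝ} {y : EuclideanSpace ℝ (Fin n)}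
    (c : ℝ) (hf : ContDiffAt ℝ 2 f y) : lap (c • f) y = c * lap f y := by
  simp [lap, iteratedFDeriv_const_smul_apply hf, Finset.mul_sum]

lemma continuous_lap {f : EuclideanSpace ℝ (Fin n) → ℝ} (hf : ContDiff ℝ 2 f) :
    Continuous (lap f) :=
  continuous_finsetSum _ fun _ _ =>
    (continuous_eval_const _).comp (hf.continuous_iteratedFDeriv le_rfl)

lemma lap_le_const_mul_lap_of_touching {Ω : Set (EuclideanSpace ℝ (Fin n))}
    {ν : EuclideanSpace ℝ (Fin n) → EuclideanSpace ℝ (Fin n)}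
    (hν_unit : ∀ y ∈ frontier Ω, ‖ν y‖ = 1)
    (hν_out : ∀ y ∈ frontier Ω, ∃ r > (0:ℝ), ball (y - r • ν y) r ⊆ Ω)
    {φ p : EuclideanSpace ℝ (Fin n) → ℝ} (hφ : ContDiff ℝ 2 φ) (hp : ContDiff ℝ 2 p)
    (hφN : ∀ y ∈ frontier Ω, fderiv ℝ φ y (ν y) = 0)
    (hpN : ∀ y ∈ frontier Ω, fderiv ℝ p y (ν y) = 0)
    {α : ℝ} {y₀ : EuclideanSpace ℝ (Fin n)} (hy₀ : y₀ ∈ closure Ω)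
    (htouch : p y₀ = α * φ y₀) (hle : ∀ y ∈ closure Ω, p y ≤ α * φ y) :
    lap p y₀ ≤ α * lap φ y₀ := by
  have hαφ : ContDiff ℝ 2 (α • φ) := hφ.const_smul α
  rw [← sub_nonneg, ← lap_const_smul α hφ.contDiffAt, ← lap_sub hαφ.contDiffAt hp.contDiffAt]
  refine lap_nonneg (IsMinOn.fderiv_fderiv_apply_nonneg_of_interior_ball hν_unit hν_out
    (hαφ.sub hp) (fun z hz => ?_) hy₀ (fun z hz => ?_))
  · rw [fderiv_fun_sub (hαφ.differentiable two_ne_zero z) (hp.differentiable two_ne_zero z),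
      fderiv_const_smul (hφ.differentiable two_ne_zero z)]
    simp [hφN z hz, hpN z hz]
  · change α * φ y₀ - p y₀ ≤ α * φ z - p z
    linarith [hle z hz]

end Laplacian

section Integral

variable {X : Type*} [TopologicalSpace X] [MeasurableSpace X] [OpensMeasurableSpace X]
  {μ : Measure X} [IsFiniteMeasureOnCompacts μ]

lemma continuousOn_setIntegral_of_continuousOn_prod {Y G : Type*} [TopologicalSpace Y]
    [FirstCountableTopology Y] [NormedAddCommGroup G] [NormedSpace ℝ G]
    [SecondCountableTopologyEither X G] {f : Y → X → G} {s : Set Y} {k t : Set X}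
    (hs : IsCompact s) (hk : IsCompact k) (ht : MeasurableSet t) (htk : t ⊆ k)
    (hf : ContinuousOn (Function.uncurry f) (s ×ˢ k)) :
    ContinuousOn (fun y => ∫ z in t, f y z ∂μ) s := by
  obtain ⟨C, hC⟩ := (hs.prod hk).exists_bound_of_continuousOn hf
  intro y₀ hy₀
  refine continuousWithinAt_of_dominated (bound := fun _ => C) ?_ ?_
    (integrableOn_const ((measure_mono htk).trans_lt hk.measure_lt_top).ne) ?_
  · filter_upwards [self_mem_nhdsWithin] with y hy
    exact ((hf.uncurry_left y hy).mono htk).aestronglyMeasurable ht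
  · filter_upwards [self_mem_nhdsWithin] with y hy
    exact (ae_restrict_iff' ht).2 (ae_of_all _ fun z hz => hC (y, z) ⟨hy, htk hz⟩)
  · exact (ae_restrict_iff' ht).2 (ae_of_all _ fun z hz => hf.uncurry_right z (htk hz) y₀ hy₀)

lemma continuousOn_setIntegral_kernel_mul [FirstCountableTopology X] {k t : Set X}
    (hk : IsCompact k) (ht : MeasurableSet t) (htk : t ⊆ k) {M : X → X → ℝ}
    (hM : ContinuousOn (fun q : X × X => M q.1 q.2) (k ×ˢ k)) {f : X → ℝ} (hf : Continuous f) :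
    ContinuousOn (fun y => ∫ z in t, M y z * f z ∂μ) k :=
  continuousOn_setIntegral_of_continuousOn_prod hk hk ht htk
    (hM.mul (hf.comp continuous_snd).continuousOn)

lemma setIntegral_mul_le_const_mul_setIntegral [T2Space X] {k : Set X} (hk : IsCompact k)
    {m f g : X → ℝ} (hm : ContinuousOn m k) (hm0 : ∀ z ∈ k, 0 ≤ m z)
    (hf : ContinuousOn f k) (hg : ContinuousOn g k) {α : ℝ} (hle : ∀ z ∈ k, f z ≤ α * g z) :
    ∫ z in k, m z * f z ∂μ ≤ α * ∫ z in k, m z * g z ∂μ := by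
  rw [← integral_const_mul]
  refine setIntegral_mono_on ((hm.mul hf).integrableOn_compact hk)
    (((hm.mul hg).integrableOn_compact hk).const_mul α) hk.measurableSet fun z hz => ?_
  rw [mul_left_comm]
  exact mul_le_mul_of_nonneg_left (hle z hz) (hm0 z hz)

end Integral

lemma IsCompact.exists_touching_multiple {X : Type*} [TopologicalSpace X] {K : Set X}
    (hK : IsCompact K) (hne : K.Nonempty) {p φ : X → ℝ} (hp : ContinuousOn p K)
    (hφ : ContinuousOn φ K) (hφpos : ∀ y ∈ K, 0 < φ y) :
    ∃ y₀ ∈ K, ∃ α : ℝ, p y₀ = α * φ y₀ ∧ ∀ y ∈ K, p y ≤ α * φ y := by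
  obtain ⟨y₀, hy₀, hmax⟩ := hK.exists_isMaxOn hne (hp.div hφ fun y hy => (hφpos y hy).ne')
  refine ⟨y₀, hy₀, p y₀ / φ y₀, (div_mul_cancel₀ _ (hφpos y₀ hy₀).ne').symm, fun y hy => ?_⟩
  exact (div_le_iff₀ (hφpos y hy)).1 (hmax hy)

theorem stmt16_general {n : ℕ} (Ω : Set (EuclideanSpace ℝ (Fin n)))
    (hΩopen : IsOpen Ω) (hΩbdd : Bornology.IsBounded Ω)
    (ν : EuclideanSpace ℝ (Fin n) → EuclideanSpace ℝ (Fin n))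
    (hν_unit : ∀ y ∈ frontier Ω, ‖ν y‖ = 1)
    (hν_out : ∀ y ∈ frontier Ω, ∃ r > (0:ℝ), Metric.ball (y - r • ν y) r ⊆ Ω)
    (a : EuclideanSpace ℝ (Fin n) → ℝ) (ha : ContinuousOn a (closure Ω))
    (μ ε β : ℝ) (hμ : 0 < μ) (hε : 0 < ε) (hβ : 0 ≤ β)
    (M K : EuclideanSpace ℝ (Fin n) → EuclideanSpace ℝ (Fin n) → ℝ)
    (hM : ContinuousOn (fun q : EuclideanSpace ℝ (Fin n) × EuclideanSpace ℝ (Fin n) => M q.1 q.2)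
      (closure Ω ×ˢ closure Ω))
    (hMpos : ∀ y ∈ closure Ω, ∀ z ∈ closure Ω, 0 < M y z)
    (hK : ContinuousOn (fun q : EuclideanSpace ℝ (Fin n) × EuclideanSpace ℝ (Fin n) => K q.1 q.2)
      (closure Ω ×ˢ closure Ω))
    (hKpos : ∀ y ∈ closure Ω, ∀ z ∈ closure Ω, 0 < K y z)
    -- the principal eigenpair, with positive eigenvalue
    (lam : ℝ) (hlam : 0 < lam)
    (φ : EuclideanSpace ℝ (Fin n) → ℝ)
    (hφreg : ContDiff ℝ 2 φ) (hφpos : ∀ y ∈ closure Ω, 0 < φ y)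
    (heig : ∀ y ∈ Ω,
      -ε * lap φ y - μ * ((∫ z in closure Ω, M y z * φ z) - φ y) = (a y + lam) * φ y)
    (hφNeumann : ∀ y ∈ frontier Ω, fderiv ℝ φ y (ν y) = 0)
    -- a nonnegative bounded Neumann solution
    (p : EuclideanSpace ℝ (Fin n) → ℝ)
    (hpreg : ContDiff ℝ 2 p)
    (hpnonneg : ∀ y ∈ closure Ω, 0 ≤ p y)
    (heq : ∀ y ∈ Ω,
      -ε * lap p y - μ * ((∫ z in closure Ω, M y z * p z) - p y)
        = p y * (a y - (∫ z in Ω, K y z * p z) - β * p y))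
    (hpNeumann : ∀ y ∈ frontier Ω, fderiv ℝ p y (ν y) = 0) :
    ∀ y ∈ closure Ω, p y = 0 := by
  intro y hy
  have hcpt : IsCompact (closure Ω) := hΩbdd.isCompact_closure
  have hφc := hφreg.continuous
  have hpc := hpreg.continuous
  obtain ⟨y₀, hy₀, α, htouch, hle⟩ :=
    hcpt.exists_touching_multiple ⟨y, hy⟩ hpc.continuousOn hφc.continuousOn hφpos
  rcases le_or_gt α 0 with hα | hα
  · exact le_antisymm ((hle y hy).trans (mul_nonpos_of_nonpos_of_nonneg hα (hφpos y hy).le))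
      (hpnonneg y hy)
  have hpy₀ : 0 < p y₀ := htouch ▸ mul_pos hα (hφpos y₀ hy₀)
  have hlap := lap_le_const_mul_lap_of_touching hν_unit hν_out hφreg hpreg hφNeumann hpNeumann
    hy₀ htouch hle
  have hMint := setIntegral_mul_le_const_mul_setIntegral (μ := volume) hcpt
    (hM.uncurry_left y₀ hy₀) (fun z hz => (hMpos y₀ hy₀ z hz).le) hpc.continuousOn
    hφc.continuousOn hle
  have hKint : 0 ≤ ∫ z in Ω, K y₀ z * p z := setIntegral_nonneg hΩopen.measurableSet fun z hz =>
    mul_nonneg (hKpos y₀ hy₀ z (subset_closure hz)).le (hpnonneg z (subset_closure hz))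
  have hMφ := continuousOn_setIntegral_kernel_mul (μ := volume) hcpt
    isClosed_closure.measurableSet subset_rfl hM hφc
  have hMp := continuousOn_setIntegral_kernel_mul (μ := volume) hcpt
    isClosed_closure.measurableSet subset_rfl hM hpc
  have hKp := continuousOn_setIntegral_kernel_mul (μ := volume) hcpt hΩopen.measurableSet
    subset_closure hK hpc
  have hlapφ := continuous_lap hφreg
  have hlapp := continuous_lap hpreg
  have e1 := EqOn.of_subset_closure heig (by fun_prop) (by fun_prop) subset_closure subset_rfl hy₀
  have e2 := EqOn.of_subset_closure heq (by fun_prop) (by fun_prop) subset_closure subset_rfl hy₀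
  beta_reduce at e1 e2
  have hnonpos : lam * p y₀ + p y₀ * (∫ z in Ω, K y₀ z * p z) + β * p y₀ ^ 2 ≤ 0 := by
    linear_combination (-α) * e1 + e2 + (lam + a y₀ - μ) * htouch + ε * hlap + μ * hMint
  nlinarith [mul_pos hpy₀ hlam, mul_nonneg hpy₀.le hKint, mul_nonneg hβ (sq_nonneg (p y₀))]

/-- Nonexistence below the principal eigenvalue. If λ₁^ε > 0 and
(λ₁^ε, φ^ε > 0) solves the Neumann eigenproblem −εΔφ − μ(M⋆φ − φ) = (a + λ₁^ε)φ, then the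
only nonnegative bounded Neumann solution of −εΔp − μ(M⋆p − p) = p(a − K⋆p − βp) is p ≡ 0. -/
theorem stmt16 {n : ℕ} (Ω : Set (EuclideanSpace ℝ (Fin n)))
    (hΩopen : IsOpen Ω) (hΩbdd : Bornology.IsBounded Ω) (hΩne : Ω.Nonempty)
    (hC3 : ∃ R > (0:ℝ), ContDiffOn ℝ 3 (fun y => Metric.infDist y (frontier Ω))
      {y ∈ closure Ω | Metric.infDist y (frontier Ω) < R})
    (ν : EuclideanSpace ℝ (Fin n) → EuclideanSpace ℝ (Fin n))
    (hν_unit : ∀ y ∈ frontier Ω, ‖ν y‖ = 1)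
    (hν_out : ∀ y ∈ frontier Ω, ∃ r > (0:ℝ), Metric.ball (y - r • ν y) r ⊆ Ω)
    (a : EuclideanSpace ℝ (Fin n) → ℝ) (ha : ContinuousOn a (closure Ω))
    (μ ε β : ℝ) (hμ : 0 < μ) (hε : 0 < ε) (hβ : 0 ≤ β)
    (M K : EuclideanSpace ℝ (Fin n) → EuclideanSpace ℝ (Fin n) → ℝ)
    (hM : ContinuousOn (fun q : EuclideanSpace ℝ (Fin n) × EuclideanSpace ℝ (Fin n) => M q.1 q.2)
      (closure Ω ×ˢ closure Ω))
    (hMpos : ∀ y ∈ closure Ω, ∀ z ∈ closure Ω, 0 < M y z)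
    (hK : ContinuousOn (fun q : EuclideanSpace ℝ (Fin n) × EuclideanSpace ℝ (Fin n) => K q.1 q.2)
      (closure Ω ×ˢ closure Ω))
    (hKpos : ∀ y ∈ closure Ω, ∀ z ∈ closure Ω, 0 < K y z)
    -- the principal eigenpair, with positive eigenvalue
    (lam : ℝ) (hlam : 0 < lam)
    (φ : EuclideanSpace ℝ (Fin n) → ℝ)
    (hφreg : ContDiff ℝ 2 φ) (hφpos : ∀ y ∈ closure Ω, 0 < φ y)
    (heig : ∀ y ∈ Ω,
      -ε * lap φ y - μ * ((∫ z in closure Ω, M y z * φ z) - φ y) = (a y + lam) * φ y)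
    (hφNeumann : ∀ y ∈ frontier Ω, fderiv ℝ φ y (ν y) = 0)
    -- a nonnegative bounded Neumann solution
    (p : EuclideanSpace ℝ (Fin n) → ℝ)
    (hpreg : ContDiff ℝ 2 p)
    (hpnonneg : ∀ y ∈ closure Ω, 0 ≤ p y)
    (hpbdd : BddAbove (p '' closure Ω))
    (heq : ∀ y ∈ Ω,
      -ε * lap p y - μ * ((∫ z in closure Ω, M y z * p z) - p y)
        = p y * (a y - (∫ z in Ω, K y z * p z) - β * p y))
    (hpNeumann : ∀ y ∈ frontier Ω, fderiv ℝ p y (ν y) = 0) :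
    ∀ y ∈ closure Ω, p y = 0 :=
  stmt16_general Ω hΩopen hΩbdd ν hν_unit hν_out a ha μ ε β hμ hε hβ M K hM hMpos hK hKpos lam hlam
    φ hφreg hφpos heig hφNeumann p hpreg hpnonneg heq hpNeumann
end
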